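/- arXiv:1111.3509 — 5 statements merged into one kernel-verified Lean document; each statement's English description precedes it below -/
import Mathlib

section
/- Let A(j) = |φ_j⟩⟨φ_j| be the sharp observable associated to the orthonormal basis {φ_j}. If à is a d-outcome observable (POVM on Z_d) satisfying U_x Ã(j) U_x* = Ã(j+x) and V_y Ã(j) V_y* = Ã(j) for all j, x, y ∈ Z_d, then there is a probability distribution Λ on Z_d such that Ã(j) = Σ_{i∈Z_d} Λ(j−i) A(i) for all j. -/
open Matrix Kronecker Finset
open scoped ComplexOrder

/-- ω = e^{2πi/d} -/
noncomputable def ww (d : ℕ) : ℂ := Complex.exp (2 * Real.pi * Complex.I / d)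

/-- shift unitary U_x φ_k = φ_{k+x} -/
noncomputable def Um (d : ℕ) (x : ZMod d) : Matrix (ZMod d) (ZMod d) ℂ :=
  fun i j => if i = j + x then 1 else 0

/-- modulation unitary V_y φ_k = ω^{yk} φ_k -/
noncomputable def Vm (d : ℕ) (y : ZMod d) : Matrix (ZMod d) (ZMod d) ℂ :=
  Matrix.diagonal fun i => ww d ^ (y * i).val

/-- finite Fourier transform F φ_k = (1/√d) Σ_h ω^{-hk} φ_h -/
noncomputable def Fm (d : ℕ) : Matrix (ZMod d) (ZMod d) ℂ :=
  fun i j => (1 / Real.sqrt d : ℂ) * (ww d)⁻¹ ^ (i * j).val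

/-- the standard orthonormal basis vector φ_k -/
noncomputable def phiV (d : ℕ) (k : ZMod d) : ZMod d → ℂ := Pi.single k 1

/-- ψ_k = F* φ_k -/
noncomputable def psiV (d : ℕ) [NeZero d] (k : ZMod d) : ZMod d → ℂ :=
  (Fm d)ᴴ.mulVec (phiV d k)

/-- A(j) = |φ_j⟩⟨φ_j| -/
noncomputable def Aob (d : ℕ) (j : ZMod d) : Matrix (ZMod d) (ZMod d) ℂ :=
  vecMulVec (phiV d j) (star (phiV d j))

/-- B(k) = |ψ_k⟩⟨ψ_k| -/
noncomputable def Bob (d : ℕ) [NeZero d] (k : ZMod d) : Matrix (ZMod d) (ZMod d) ℂ :=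
  vecMulVec (psiV d k) (star (psiV d k))
/-! Conjugation by `V_1` multiplies the `(a, b)` entry of a matrix by `ω^(a - b)`, which is `≠ 1`
for `a ≠ b` since `ω` is a primitive `d`-th root of unity; so every `Ã(j)` is diagonal in the
basis `{φ_k}`. Covariance under `U_a` identifies the `(a, a)` entry of `Ã(j)` with the `(0, 0)`
entry of `Ã(j - a)`, so `Λ(k)` is the `(0, 0)` entry of `Ã(k)`: nonnegative by positivity, and
summing to one by normalization. -/

theorem star_ww (d : ℕ) : star (ww d) = (ww d)⁻¹ := by
  refine (RCLike.inv_eq_conj ?_).symm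
  rw [ww, Complex.norm_exp, Real.exp_eq_one_iff]
  simp [Complex.div_re, Complex.mul_re, Complex.mul_im]

theorem ww_ne_zero (d : ℕ) : ww d ≠ 0 := Complex.exp_ne_zero _

theorem ww_pow_val_injective (d : ℕ) [NeZero d] :
    Function.Injective fun a : ZMod d => ww d ^ a.val := fun a b h =>
  ZMod.val_injective d <|
    (Complex.isPrimitiveRoot_exp d (NeZero.ne d)).pow_inj (ZMod.val_lt a) (ZMod.val_lt b) h

theorem Vm_mul_mul_conjTranspose_apply (d : ℕ) [NeZero d] (M : Matrix (ZMod d) (ZMod d) ℂ)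
    (y a b : ZMod d) :
    (Vm d y * M * (Vm d y)ᴴ) a b = ww d ^ (y * a).val * M a b * (ww d ^ (y * b).val)⁻¹ := by
  simp only [Vm, diagonal_conjTranspose, Pi.star_def, diagonal_mul, mul_diagonal, star_pow,
    star_ww, inv_pow]

theorem isDiag_of_Vm_conj_eq {d : ℕ} [NeZero d] {M : Matrix (ZMod d) (ZMod d) ℂ}
    (hM : Vm d 1 * M * (Vm d 1)ᴴ = M) : M.IsDiag := by
  intro a b hab
  by_contra hne
  have h := congrFun (congrFun hM a) b
  rw [Vm_mul_mul_conjTranspose_apply, one_mul, one_mul,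
    mul_inv_eq_iff_eq_mul₀ (pow_ne_zero _ (ww_ne_zero d))] at h
  exact hab (ww_pow_val_injective d (mul_right_cancel₀ hne (by linear_combination h)))

theorem Um_mul_mul_conjTranspose_apply (d : ℕ) [NeZero d] (M : Matrix (ZMod d) (ZMod d) ℂ)
    (x a b : ZMod d) :
    (Um d x * M * (Um d x)ᴴ) a b = M (a - x) (b - x) := by
  simp [mul_apply, Um, ← sub_eq_iff_eq_add]

theorem sum_smul_Aob (d : ℕ) [NeZero d] (c : ZMod d → ℂ) :
    ∑ i, c i • Aob d i = diagonal c := by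
  ext a b
  rcases eq_or_ne a b with rfl | hab
  · simp [Aob, phiV, vecMulVec_apply, Matrix.sum_apply, Pi.single_apply]
  · simp [Aob, phiV, vecMulVec_apply, Matrix.sum_apply, Pi.single_apply, hab]

theorem covariant_invariant_povm_is_smeared_general (d : ℕ) [NeZero d]
    (At : ZMod d → Matrix (ZMod d) (ZMod d) ℂ)
    (hpos : ∀ j, (At j).PosSemidef) (hsum : ∑ j : ZMod d, At j = 1)
    (hU : ∀ j x : ZMod d, Um d x * At j * (Um d x)ᴴ = At (j + x))
    (hV : ∀ j y : ZMod d, Vm d y * At j * (Vm d y)ᴴ = At j) :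
    ∃ Λ : ZMod d → ℝ, (∀ i, 0 ≤ Λ i) ∧ (∑ i : ZMod d, Λ i = 1) ∧
      ∀ j, At j = ∑ i : ZMod d, (Λ (j - i) : ℂ) • Aob d i := by
  have hreal : ∀ j, ((At j 0 0).re : ℂ) = At j 0 0 := fun j =>
    (hpos j).isHermitian.coe_re_apply_self 0
  refine ⟨fun j => (At j 0 0).re, fun j => Complex.zero_le_real.mp ?_, ?_, fun j => ?_⟩
  · exact (hreal j).symm ▸ (hpos j).diag_nonneg
  · apply Complex.ofReal_injective
    simpa [Complex.ofReal_sum, hreal, Matrix.sum_apply] using congrFun (congrFun hsum 0) 0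
  · have hdiag : ∀ a, At j a a = At (j - a) 0 0 := fun a => by
      simpa [Um_mul_mul_conjTranspose_apply] using (congrFun (congrFun (hU (j - a) a) a) a).symm
    rw [sum_smul_Aob, ← (isDiag_of_Vm_conj_eq (hV j 1)).diagonal_diag]
    ext a b
    simp [diagonal_apply, hdiag, hreal]

theorem covariant_invariant_povm_is_smeared (d : ℕ) (hd : 2 ≤ d) [NeZero d]
    (At : ZMod d → Matrix (ZMod d) (ZMod d) ℂ)
    (hpos : ∀ j, (At j).PosSemidef) (hsum : ∑ j : ZMod d, At j = 1)
    (hU : ∀ j x : ZMod d, Um d x * At j * (Um d x)ᴴ = At (j + x))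
    (hV : ∀ j y : ZMod d, Vm d y * At j * (Vm d y)ᴴ = At j) :
    ∃ Λ : ZMod d → ℝ, (∀ i, 0 ≤ Λ i) ∧ (∑ i : ZMod d, Λ i = 1) ∧
      ∀ j, At j = ∑ i : ZMod d, (Λ (j - i) : ℂ) • Aob d i :=
  covariant_invariant_povm_is_smeared_general d At hpos hsum hU hV
end

section
/- Let T be a density operator on C^d and C_T(j,k) = (1/d) U_j V_k T V_k* U_j*. Then the marginals of C_T are Σ_{k} C_T(j,k) = Σ_{i} Λ(j−i) A(i) and Σ_{j} C_T(j,k) = Σ_{i} Γ(k−i) B(i), where Λ(j) = tr[A(−j) T], Γ(k) = tr[B(−k) T], A(i) = |φ_i⟩⟨φ_i|, and B(i) = |ψ_i⟩⟨ψ_i| with ψ_i = F* φ_i. -/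
open Matrix Kronecker Finset
open scoped ComplexOrder

/-!
Entrywise, `U_j V_k T V_k* U_j*` is `ω^{k(a-b)} T(a-j, b-j)`, so summing over `k` kills the
off-diagonal entries by orthogonality of characters of `ZMod d`; this is the first marginal.
The Fourier transform intertwines shifts and modulations, `F U_j = V_{-j} F` and `F V_k = U_k F`,
so, the Weyl phase having modulus one, `F C_T(j, k) F* = C_{F T F*}(k, -j)`, while
`B(i) = F* A(i) F`. The second marginal is therefore the first marginal of `F T F*`, conjugated
back by the unitary `F`.
-/

open ZMod

lemma smul_mul_mul_conjTranspose_smul {n R : Type*} [Fintype n] [CommSemiring R] [StarRing R]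
    (c : R) (A T : Matrix n n R) :
    (c • A) * T * (c • A)ᴴ = (c * star c) • (A * T * Aᴴ) := by
  rw [conjTranspose_smul, Matrix.smul_mul, Matrix.smul_mul, Matrix.mul_smul, smul_smul]

section
variable {d : ℕ}

lemma Um_conjTranspose (x : ZMod d) : (Um d x)ᴴ = Um d (-x) := by
  ext a b
  simp only [Um, conjTranspose_apply, apply_ite star, star_one, star_zero]
  exact if_congr ⟨fun h => by rw [h]; ring, fun h => by rw [h]; ring⟩ rfl rfl

lemma Aob_eq_single (i : ZMod d) : Aob d i = single i i 1 := by
  rw [Aob, phiV, Pi.star_single, star_one, single_eq_single_vecMulVec_single]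

end

section
variable {d : ℕ} [NeZero d]

lemma ww_pow_val (x : ZMod d) : ww d ^ x.val = stdAddChar x := by
  rw [stdAddChar_apply, toCircle_apply, ww, ← Complex.exp_nat_mul]
  congr 1
  ring

lemma star_stdAddChar (x : ZMod d) : star (stdAddChar x : ℂ) = stdAddChar (-x) := by
  rw [AddChar.map_neg_eq_inv, stdAddChar_apply, ← Circle.coe_inv, Circle.coe_inv_eq_conj]
  rfl

lemma sum_stdAddChar_mul (n : ZMod d) :
    ∑ k : ZMod d, (stdAddChar (k * n) : ℂ) = if n = 0 then (d : ℂ) else 0 := by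
  rw [AddChar.sum_mulShift _ (isPrimitive_stdAddChar d), ZMod.card]
  split_ifs <;> simp

lemma Vm_eq_diagonal (y : ZMod d) : Vm d y = diagonal fun i => stdAddChar (y * i) := by
  simp only [Vm, ww_pow_val]

lemma Vm_conjTranspose (y : ZMod d) : (Vm d y)ᴴ = Vm d (-y) := by
  simp only [Vm_eq_diagonal, diagonal_conjTranspose, Pi.star_def, star_stdAddChar, neg_mul]

lemma Um_mul_apply (x : ZMod d) (M : Matrix (ZMod d) (ZMod d) ℂ) (a b : ZMod d) :
    (Um d x * M) a b = M (a - x) b := by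
  have h (c : ZMod d) : (a = c + x) ↔ (c = a - x) :=
    ⟨fun h => by rw [h]; ring, fun h => by rw [h]; ring⟩
  simp only [Um, mul_apply, ite_mul, one_mul, zero_mul, h, Finset.sum_ite_eq', Finset.mem_univ,
    if_true]

lemma mul_Um_apply (x : ZMod d) (M : Matrix (ZMod d) (ZMod d) ℂ) (a b : ZMod d) :
    (M * Um d x) a b = M a (b + x) := by
  simp [Um, mul_apply]

lemma Vm_mul_Um (x y : ZMod d) :
    Vm d y * Um d x = (stdAddChar (y * x) : ℂ) • (Um d x * Vm d y) := by
  ext a b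
  rw [Matrix.smul_apply, Um_mul_apply, Vm_eq_diagonal, diagonal_mul, diagonal_apply, Um]
  split_ifs with h h' h'
  · rw [smul_eq_mul, mul_one, ← AddChar.map_add_eq_mul]
    ring_nf
  · exact absurd (by rw [h]; ring) h'
  · exact absurd (by rw [← h']; ring) h
  · simp

lemma Fm_apply (i j : ZMod d) : Fm d i j = (1 / Real.sqrt d : ℂ) * stdAddChar (-(i * j)) := by
  rw [Fm, inv_pow, ww_pow_val, AddChar.map_neg_eq_inv]

lemma Fm_conjTranspose_mul_self : (Fm d)ᴴ * Fm d = 1 := by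
  have hsq : star (1 / Real.sqrt d : ℂ) * (1 / Real.sqrt d : ℂ) = (d : ℂ)⁻¹ := by
    rw [Complex.star_def, map_div₀, map_one, Complex.conj_ofReal, div_mul_div_comm, one_mul,
      ← Complex.ofReal_mul, Real.mul_self_sqrt (Nat.cast_nonneg d), Complex.ofReal_natCast,
      one_div]
  ext a b
  calc ((Fm d)ᴴ * Fm d) a b = (d : ℂ)⁻¹ * ∑ c : ZMod d, (stdAddChar (c * (a - b)) : ℂ) := by
        simp only [mul_apply, conjTranspose_apply, Fm_apply, star_mul', star_stdAddChar, mul_sum]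
        refine sum_congr rfl fun c _ => ?_
        rw [← hsq, mul_mul_mul_comm, ← AddChar.map_add_eq_mul]
        ring_nf
    _ = (1 : Matrix (ZMod d) (ZMod d) ℂ) a b := by
        simp only [sum_stdAddChar_mul, one_apply, sub_eq_zero]
        split_ifs <;> simp [NeZero.ne]

lemma Fm_mul_Um (x : ZMod d) : Fm d * Um d x = Vm d (-x) * Fm d := by
  ext a b
  rw [mul_Um_apply, Vm_eq_diagonal, diagonal_mul, Fm_apply, Fm_apply, mul_left_comm,
    ← AddChar.map_add_eq_mul]
  ring_nf

lemma Fm_mul_Vm (y : ZMod d) : Fm d * Vm d y = Um d y * Fm d := by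
  ext a b
  rw [Um_mul_apply, Vm_eq_diagonal, mul_diagonal, Fm_apply, Fm_apply, mul_assoc,
    ← AddChar.map_add_eq_mul]
  ring_nf

lemma Bob_eq (i : ZMod d) : Bob d i = (Fm d)ᴴ * Aob d i * Fm d := by
  rw [Bob, Aob, psiV, star_mulVec, conjTranspose_conjTranspose, mul_vecMulVec, vecMulVec_mul]

lemma trace_Aob_mul_Fm_conj (i : ZMod d) (T : Matrix (ZMod d) (ZMod d) ℂ) :
    trace (Aob d i * (Fm d * T * (Fm d)ᴴ)) = trace (Bob d i * T) := by
  rw [Bob_eq, ← Matrix.mul_assoc, ← Matrix.mul_assoc, trace_mul_comm]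
  simp only [Matrix.mul_assoc]

/-- The covariant phase-space observable `C_T(j, k)` of the paper. -/
noncomputable def covObs (T : Matrix (ZMod d) (ZMod d) ℂ) (j k : ZMod d) :
    Matrix (ZMod d) (ZMod d) ℂ :=
  (1 / d : ℂ) • (Um d j * Vm d k * T * (Vm d k)ᴴ * (Um d j)ᴴ)

lemma covObs_apply (T : Matrix (ZMod d) (ZMod d) ℂ) (j k a b : ZMod d) :
    covObs T j k a b = (1 / d : ℂ) * (stdAddChar (k * (a - b)) * T (a - j) (b - j)) := by
  rw [covObs, Vm_conjTranspose, Um_conjTranspose, Matrix.smul_apply, smul_eq_mul, mul_Um_apply,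
    Vm_eq_diagonal (-k), mul_diagonal, Matrix.mul_assoc, Um_mul_apply, Vm_eq_diagonal,
    diagonal_mul, mul_right_comm, ← AddChar.map_add_eq_mul, ← sub_eq_add_neg]
  ring_nf

lemma covObs_marginal_fst (T : Matrix (ZMod d) (ZMod d) ℂ) (j : ZMod d) :
    ∑ k : ZMod d, covObs T j k = ∑ i : ZMod d, trace (Aob d (-(j - i)) * T) • Aob d i := by
  have hrhs : ∑ i : ZMod d, trace (Aob d (-(j - i)) * T) • Aob d i =
      diagonal fun i => T (i - j) (i - j) := by
    simp only [Aob_eq_single, trace_single_mul, smul_single, smul_eq_mul, one_mul, mul_one,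
      neg_sub, sum_single_eq_diagonal]
  rw [hrhs]
  ext a b
  simp only [Matrix.sum_apply, covObs_apply, ← mul_sum, ← sum_mul, sum_stdAddChar_mul,
    sub_eq_zero, diagonal_apply]
  split_ifs with h
  · rw [h]
    field_simp [NeZero.ne]
  · simp

lemma Fm_mul_covObs_mul_conjTranspose (T : Matrix (ZMod d) (ZMod d) ℂ) (j k : ZMod d) :
    Fm d * covObs T j k * (Fm d)ᴴ = covObs (Fm d * T * (Fm d)ᴴ) k (-j) := by
  have hW : Fm d * (Um d j * Vm d k) =
      (stdAddChar (-j * k) : ℂ) • (Um d k * Vm d (-j) * Fm d) := by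
    rw [← Matrix.mul_assoc, Fm_mul_Um, Matrix.mul_assoc, Fm_mul_Vm, ← Matrix.mul_assoc,
      Vm_mul_Um, Matrix.smul_mul]
  have hphase : (stdAddChar (-j * k) : ℂ) * star (stdAddChar (-j * k) : ℂ) = 1 := by
    rw [star_stdAddChar, ← AddChar.map_add_eq_mul, add_neg_cancel, AddChar.map_zero_eq_one]
  calc Fm d * covObs T j k * (Fm d)ᴴ
      = (1 / d : ℂ) • ((Fm d * (Um d j * Vm d k)) * T * (Fm d * (Um d j * Vm d k))ᴴ) := by
        simp only [covObs, conjTranspose_mul, Matrix.mul_smul, Matrix.smul_mul, Matrix.mul_assoc]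
    _ = covObs (Fm d * T * (Fm d)ᴴ) k (-j) := by
        rw [hW, smul_mul_mul_conjTranspose_smul, hphase, one_smul]
        simp only [covObs, conjTranspose_mul, Matrix.mul_assoc]

lemma covObs_marginal_snd (T : Matrix (ZMod d) (ZMod d) ℂ) (k : ZMod d) :
    ∑ j : ZMod d, covObs T j k = ∑ i : ZMod d, trace (Bob d (-(k - i)) * T) • Bob d i := by
  calc ∑ j : ZMod d, covObs T j k
      = (Fm d)ᴴ * (Fm d * (∑ j : ZMod d, covObs T j k) * (Fm d)ᴴ) * Fm d := by
        simp only [← Matrix.mul_assoc, Fm_conjTranspose_mul_self, Matrix.one_mul]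
        rw [Matrix.mul_assoc, Fm_conjTranspose_mul_self, Matrix.mul_one]
    _ = (Fm d)ᴴ * (∑ j : ZMod d, covObs (Fm d * T * (Fm d)ᴴ) k j) * Fm d := by
        rw [mul_sum, sum_mul]
        simp only [Fm_mul_covObs_mul_conjTranspose]
        rw [Fintype.sum_equiv (Equiv.neg (ZMod d)) (fun j => covObs (Fm d * T * (Fm d)ᴴ) k (-j))
          _ fun _ => rfl]
    _ = ∑ i : ZMod d, trace (Bob d (-(k - i)) * T) • Bob d i := by
        rw [covObs_marginal_fst, mul_sum, sum_mul]
        refine sum_congr rfl fun i _ => ?_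
        rw [Matrix.mul_smul, Matrix.smul_mul, ← Bob_eq, trace_Aob_mul_Fm_conj]

end

theorem covariant_phase_space_observable_marginals_general (d : ℕ) [NeZero d]
    (T : Matrix (ZMod d) (ZMod d) ℂ) :
    (∀ j : ZMod d, ∑ k : ZMod d,
        (1 / d : ℂ) • (Um d j * Vm d k * T * (Vm d k)ᴴ * (Um d j)ᴴ) =
      ∑ i : ZMod d, Matrix.trace (Aob d (-(j - i)) * T) • Aob d i) ∧
    (∀ k : ZMod d, ∑ j : ZMod d,
        (1 / d : ℂ) • (Um d j * Vm d k * T * (Vm d k)ᴴ * (Um d j)ᴴ) =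
      ∑ i : ZMod d, Matrix.trace (Bob d (-(k - i)) * T) • Bob d i) :=
  ⟨covObs_marginal_fst T, covObs_marginal_snd T⟩

theorem covariant_phase_space_observable_marginals (d : ℕ) (hd : 2 ≤ d) [NeZero d]
    (T : Matrix (ZMod d) (ZMod d) ℂ) (hT : T.PosSemidef) (htr : T.trace = 1) :
    (∀ j : ZMod d, ∑ k : ZMod d,
        (1 / d : ℂ) • (Um d j * Vm d k * T * (Vm d k)ᴴ * (Um d j)ᴴ) =
      ∑ i : ZMod d, Matrix.trace (Aob d (-(j - i)) * T) • Aob d i) ∧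
    (∀ k : ZMod d, ∑ j : ZMod d,
        (1 / d : ℂ) • (Um d j * Vm d k * T * (Vm d k)ᴴ * (Um d j)ᴴ) =
      ∑ i : ZMod d, Matrix.trace (Bob d (-(k - i)) * T) • Bob d i) :=
  covariant_phase_space_observable_marginals_general d T
end

section
/- Let 0 < λ, γ ≤ 1. The observables A_λ and B_γ are jointly measurable if and only if A_{λ'} and B_{γ'} are jointly measurable for all 0 ≤ λ' ≤ λ and 0 ≤ γ' ≤ γ. -/
open Matrix Kronecker Finset
open scoped ComplexOrder

/-- the uniformly noisy version A_λ of A -/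
noncomputable def Asm (d : ℕ) (l : ℝ) (j : ZMod d) : Matrix (ZMod d) (ZMod d) ℂ :=
  (l : ℂ) • Aob d j + (((1 - l) / d : ℝ) : ℂ) • 1

/-- the uniformly noisy version B_γ of B -/
noncomputable def Bsm (d : ℕ) [NeZero d] (g : ℝ) (k : ZMod d) : Matrix (ZMod d) (ZMod d) ℂ :=
  (g : ℂ) • Bob d k + (((1 - g) / d : ℝ) : ℂ) • 1

/-- joint measurability of A_λ and B_γ -/
def JM (d : ℕ) [NeZero d] (l g : ℝ) : Prop :=
  ∃ C : ZMod d → ZMod d → Matrix (ZMod d) (ZMod d) ℂ,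
    (∀ j k, (C j k).PosSemidef) ∧
    (∀ j, ∑ k : ZMod d, C j k = Asm d l j) ∧
    (∀ k, ∑ j : ZMod d, C j k = Bsm d g k)

/-! If `C` is a joint observable with marginals `A_λ` and `B_γ`, then for `0 ≤ t ≤ 1` so is
`C'(j, k) = t C(j, k) + (1 - t) A_λ(j) / d`: it keeps the first marginal and replaces the second
by `t B_γ(k) + (1 - t) id / d = B_{tγ}(k)`, because the total `∑ A_λ(j)` is `id`. Swapping the
roles of the two outcomes lowers `λ` in the same way, and every `λ' ≤ λ`, `γ' ≤ γ` is reached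
with `t = λ'/λ` and `t = γ'/γ`. -/

section JointObservable

variable {X Y n : Type*} [Fintype X] [Fintype Y]

lemma exists_joint_mix_uniform_right [Nonempty Y] (C : X → Y → Matrix n n ℂ)
    (hC : ∀ x y, (C x y).PosSemidef) {t : ℝ} (ht0 : 0 ≤ t) (ht1 : t ≤ 1) :
    ∃ C' : X → Y → Matrix n n ℂ, (∀ x y, (C' x y).PosSemidef) ∧
      (∀ x, ∑ y, C' x y = ∑ y, C x y) ∧
      (∀ y, ∑ x, C' x y = (t : ℂ) • ∑ x, C x y +
        (((1 - t) / Fintype.card Y : ℝ) : ℂ) • ∑ x, ∑ y, C x y) := by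
  set s : ℝ := (1 - t) / Fintype.card Y
  refine ⟨fun x y => (t : ℂ) • C x y + (s : ℂ) • ∑ y', C x y', fun x y => ?_, fun x => ?_,
    fun y => ?_⟩
  · exact ((hC x y).smul (Complex.zero_le_real.mpr ht0)).add
      ((posSemidef_sum _ fun y' _ => hC x y').smul (Complex.zero_le_real.mpr (by positivity)))
  · have hY : (Fintype.card Y : ℂ) ≠ 0 := Nat.cast_ne_zero.mpr Fintype.card_ne_zero
    rw [sum_add_distrib, ← smul_sum, sum_const, card_univ, ← Nat.cast_smul_eq_nsmul ℂ, smul_smul,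
      ← add_smul]
    convert one_smul ℂ _
    simp only [s]
    push_cast
    field_simp
    ring
  · rw [sum_add_distrib, ← smul_sum, ← smul_sum]

end JointObservable

section NoisyObservables

variable {d : ℕ}

lemma Asm_mul (t l : ℝ) (j : ZMod d) :
    Asm d (t * l) j = (t : ℂ) • Asm d l j + (((1 - t) / d : ℝ) : ℂ) • 1 := by
  simp only [Asm]
  match_scalars <;> ring

variable [NeZero d]

lemma sum_Aob : ∑ j : ZMod d, Aob d j = 1 := by
  simp only [Aob, phiV, ← Pi.single_star, star_one, ← single_eq_single_vecMulVec_single,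
    sum_single_one]

lemma sum_Asm (l : ℝ) : ∑ j : ZMod d, Asm d l j = 1 := by
  have hd : (d : ℂ) ≠ 0 := NeZero.ne _
  simp only [Asm, sum_add_distrib, ← smul_sum, sum_Aob, sum_const, card_univ, ZMod.card,
    ← Nat.cast_smul_eq_nsmul ℂ, smul_smul, ← add_smul]
  convert one_smul ℂ _
  push_cast
  field_simp
  ring

lemma Bsm_mul (t g : ℝ) (k : ZMod d) :
    Bsm d (t * g) k = (t : ℂ) • Bsm d g k + (((1 - t) / d : ℝ) : ℂ) • 1 := by
  simp only [Bsm]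
  match_scalars <;> ring

lemma JM.mul_right {l g t : ℝ} (h : JM d l g) (ht0 : 0 ≤ t) (ht1 : t ≤ 1) :
    JM d l (t * g) := by
  obtain ⟨C, hpsd, hA, hB⟩ := h
  obtain ⟨C', hpsd', hA', hB'⟩ := exists_joint_mix_uniform_right C hpsd ht0 ht1
  refine ⟨C', hpsd', fun j => (hA' j).trans (hA j), fun k => ?_⟩
  simp only [hB', hB, hA, sum_Asm, ZMod.card, Bsm_mul]

lemma JM.mul_left {l g t : ℝ} (h : JM d l g) (ht0 : 0 ≤ t) (ht1 : t ≤ 1) :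
    JM d (t * l) g := by
  obtain ⟨C, hpsd, hA, hB⟩ := h
  obtain ⟨C', hpsd', hB', hA'⟩ :=
    exists_joint_mix_uniform_right (fun k j => C j k) (fun k j => hpsd j k) ht0 ht1
  refine ⟨fun j k => C' k j, fun j k => hpsd' k j, fun j => ?_, fun k => (hB' k).trans (hB k)⟩
  simp only [hA', hA, sum_comm (f := fun k j => C j k), sum_Asm, ZMod.card, Asm_mul]

end NoisyObservables

theorem joint_measurability_monotone_general (d : ℕ) [NeZero d]
    (l g : ℝ) (hl : 0 < l) (hg : 0 < g) :
    JM d l g ↔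
      ∀ l' g' : ℝ, 0 ≤ l' → l' ≤ l → 0 ≤ g' → g' ≤ g → JM d l' g' := by
  refine ⟨fun h l' g' hl'0 hl'l hg'0 hg'g => ?_, fun h => h l g hl.le le_rfl hg.le le_rfl⟩
  have hsl : l' / l * l = l' := div_mul_cancel₀ l' hl.ne'
  have hsg : g' / g * g = g' := div_mul_cancel₀ g' hg.ne'
  rw [← hsl, ← hsg]
  exact ((h.mul_right (by positivity) ((div_le_one hg).mpr hg'g)).mul_left (by positivity)
    ((div_le_one hl).mpr hl'l))

theorem joint_measurability_monotone (d : ℕ) (hd : 2 ≤ d) [NeZero d]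
    (l g : ℝ) (hl : 0 < l) (hl1 : l ≤ 1) (hg : 0 < g) (hg1 : g ≤ 1) :
    JM d l g ↔
      ∀ l' g' : ℝ, 0 ≤ l' → l' ≤ l → 0 ≤ g' → g' ≤ g → JM d l' g' :=
  joint_measurability_monotone_general d l g hl hg
end

section
/- For d ≥ 2 and λ, γ ∈ [0,1], the inequality γ ≤ (1/d)[(d−2)(1−λ) + 2√((1−d)λ² + (d−2)λ + 1)] holds if and only if either γ + λ ≤ 1, or γ² + λ² + (2(d−2)/d)(1−γ)(1−λ) ≤ 1. -/
/-!
Put `A = d g - (d - 2)(1 - l)` and `R = (1 - d) l² + (d - 2) l + 1 = (1 - l)(1 + (d - 1) l)`.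
The left-hand side says `A ≤ 2√R`, i.e. `A ≤ 0` or `A² ≤ 4R`, and the identity
`A² - 4R = d² (g² + l² + (2(d - 2)/d)(1 - g)(1 - l) - 1)` turns `A² ≤ 4R` into the quadratic
condition. It remains to trade `A ≤ 0` for `g + l ≤ 1`: the first implies the second, and
under `g + l ≤ 1` one has `A ≤ 2(1 - l)` and `(1 - l)² ≤ R`, so `A² ≤ 4R` whenever `A > 0`.
-/

namespace BoundaryCurve

lemma le_two_mul_sqrt_iff (x y : ℝ) : x ≤ 2 * √y ↔ x ≤ 0 ∨ x ^ 2 ≤ 4 * y := by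
  have two_mul_sqrt : 2 * √y = √(4 * y) := by
    rw [show (4 : ℝ) * y = 2 ^ 2 * y by norm_num, Real.sqrt_mul (by norm_num),
      Real.sqrt_sq (by norm_num)]
  rcases le_or_gt x 0 with hx | hx
  · simpa [hx] using hx.trans (by positivity)
  · rw [two_mul_sqrt, Real.le_sqrt' hx]
    simp [hx.not_ge]

variable {d l g : ℝ}

lemma le_boundary_iff (hd : 0 < d) :
    g ≤ (1 / d) * ((d - 2) * (1 - l) + 2 * √((1 - d) * l ^ 2 + (d - 2) * l + 1)) ↔
      d * g - (d - 2) * (1 - l) ≤ 0 ∨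
        (d * g - (d - 2) * (1 - l)) ^ 2 ≤ 4 * ((1 - d) * l ^ 2 + (d - 2) * l + 1) := by
  rw [← le_two_mul_sqrt_iff, one_div, inv_mul_eq_div, le_div_iff₀' hd, sub_le_iff_le_add']

lemma symmetric_form_le_one_iff (hd : 0 < d) :
    g ^ 2 + l ^ 2 + (2 * (d - 2) / d) * (1 - g) * (1 - l) ≤ 1 ↔
      (d * g - (d - 2) * (1 - l)) ^ 2 ≤ 4 * ((1 - d) * l ^ 2 + (d - 2) * l + 1) := by
  have hdiff : (d * g - (d - 2) * (1 - l)) ^ 2 - 4 * ((1 - d) * l ^ 2 + (d - 2) * l + 1) =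
      d ^ 2 * (g ^ 2 + l ^ 2 + (2 * (d - 2) / d) * (1 - g) * (1 - l) - 1) := by
    field_simp; ring
  rw [← sub_nonpos, ← sub_nonpos (a := _ ^ 2), hdiff, mul_nonpos_iff_pos_imp_nonpos]
  simp [pow_pos hd 2, sq_nonneg d]

lemma add_le_one_of_nonpos (hd : 0 < d) (hl1 : l ≤ 1)
    (h : d * g - (d - 2) * (1 - l) ≤ 0) : g + l ≤ 1 := by
  nlinarith

lemma sq_le_of_add_le_one (hd : 0 ≤ d) (hl : 0 ≤ l) (hgl : g + l ≤ 1)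
    (h : 0 < d * g - (d - 2) * (1 - l)) :
    (d * g - (d - 2) * (1 - l)) ^ 2 ≤ 4 * ((1 - d) * l ^ 2 + (d - 2) * l + 1) := by
  have hA : d * g - (d - 2) * (1 - l) ≤ 2 * (1 - l) := by nlinarith
  have hR : (1 - l) ^ 2 ≤ (1 - d) * l ^ 2 + (d - 2) * l + 1 := by
    nlinarith [mul_nonneg (mul_nonneg hd hl) (by linarith : (0 : ℝ) ≤ 1 - l)]
  nlinarith [pow_le_pow_left₀ h.le hA 2]

end BoundaryCurve

open BoundaryCurve in
theorem boundary_curve_symmetric_form_general (d : ℕ) (hd : 2 ≤ d) (l g : ℝ)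
    (hl : 0 ≤ l) (hl1 : l ≤ 1) :
    g ≤ (1 / d) * ((d - 2) * (1 - l) +
        2 * Real.sqrt ((1 - d) * l ^ 2 + (d - 2) * l + 1)) ↔
      (g + l ≤ 1 ∨
        g ^ 2 + l ^ 2 + (2 * (d - 2) / d) * (1 - g) * (1 - l) ≤ 1) := by
  have hd₀ : (0 : ℝ) < d := by exact_mod_cast (by omega : 0 < d)
  rw [le_boundary_iff hd₀, symmetric_form_le_one_iff hd₀]
  constructor
  · rintro (h | h)
    · exact Or.inl (add_le_one_of_nonpos hd₀ hl1 h)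
    · exact Or.inr h
  · rintro (h | h)
    · rcases le_or_gt (d * g - (d - 2) * (1 - l)) 0 with hA | hA
      · exact Or.inl hA
      · exact Or.inr (sq_le_of_add_le_one hd₀.le hl h hA)
    · exact Or.inr h

theorem boundary_curve_symmetric_form (d : ℕ) (hd : 2 ≤ d) (l g : ℝ)
    (hl : 0 ≤ l) (hl1 : l ≤ 1) (hg : 0 ≤ g) (hg1 : g ≤ 1) :
    g ≤ (1 / d) * ((d - 2) * (1 - l) +
        2 * Real.sqrt ((1 - d) * l ^ 2 + (d - 2) * l + 1)) ↔
      (g + l ≤ 1 ∨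
        g ^ 2 + l ^ 2 + (2 * (d - 2) / d) * (1 - g) * (1 - l) ≤ 1) :=
  boundary_curve_symmetric_form_general d hd l g hl hl1
end

section
/- If λ, γ ∈ [0,1] satisfy γ ≤ (1/d)[(d−2)(1−λ) + 2√((1−d)λ² + (d−2)λ + 1)], then γ + λ ≤ 1 + (√d − 1)/(d − 1). -/
set_option maxHeartbeats 1000000


theorem linear_necessary_condition (d : ℕ) (hd : 2 ≤ d) (l g : ℝ)
    (hl : 0 ≤ l) (hl1 : l ≤ 1) (hg : 0 ≤ g) (hg1 : g ≤ 1)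
    (h : g ≤ (1 / d) * ((d - 2) * (1 - l) +
        2 * Real.sqrt ((1 - d) * l ^ 2 + (d - 2) * l + 1))) :
    g + l ≤ 1 + (Real.sqrt d - 1) / (d - 1) := by
  have hd' : (2:ℝ) ≤ (d:ℝ) := by exact_mod_cast hd
  set s := Real.sqrt (d:ℝ) with hs_def
  have hs : s ^ 2 = (d:ℝ) := Real.sq_sqrt (by linarith)
  have hs0 : 0 ≤ s := Real.sqrt_nonneg _
  have hs1 : 1 ≤ s := by nlinarith
  have h1 : (0:ℝ) < s + 1 := by linarith
  have hd0 : (0:ℝ) < (d:ℝ) := by linarith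
  have key : Real.sqrt ((1 - (d:ℝ)) * l ^ 2 + ((d:ℝ) - 2) * l + 1) ≤
      (1 - l) + (d:ℝ) / (2 * (s + 1)) := by
    set u : ℝ := (d:ℝ) / (2 * (s + 1)) with hu_def
    have hu2 : 2 * (s + 1) * u = (d:ℝ) := by
      rw [hu_def]; field_simp
    have hB : 0 ≤ (1 - l) + u := by
      have hu0 : 0 ≤ u := by rw [hu_def]; positivity
      linarith
    rw [← Real.sqrt_sq hB]
    apply Real.sqrt_le_sqrt
    have e1 : 4 * (s + 1) ^ 2 * u ^ 2 = (d:ℝ) ^ 2 := by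
      linear_combination (2 * (s + 1) * u + (d:ℝ)) * hu2
    have e2 : 4 * (s + 1) ^ 2 * u * (1 - l) = 2 * (s + 1) * (1 - l) * (d:ℝ) := by
      linear_combination (2 * (s + 1) * (1 - l)) * hu2
    have P : 4 * (s + 1) ^ 2 * l * (1 - l) ≤ 4 * (s + 1) * (1 - l) + (d:ℝ) := by
      nlinarith [sq_nonneg (s - 2 * (s + 1) * (1 - l))]
    have Pd : 4 * (s + 1) ^ 2 * (d:ℝ) * l * (1 - l) ≤
        4 * (s + 1) * (1 - l) * (d:ℝ) + (d:ℝ) ^ 2 := by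
      nlinarith [mul_le_mul_of_nonneg_right P (le_of_lt hd0)]
    have h4 : (0:ℝ) < 4 * (s + 1) ^ 2 := by positivity
    nlinarith [Pd, e1, e2, h4]
  have hfrac : (s - 1) / ((d:ℝ) - 1) = 1 / (s + 1) := by
    rw [div_eq_div_iff (by linarith) (by linarith)]
    nlinarith
  have h2 : g ≤ (1 - l) + 1 / (s + 1) := by
    calc g ≤ (1 / d) * (((d:ℝ) - 2) * (1 - l) +
          2 * Real.sqrt ((1 - (d:ℝ)) * l ^ 2 + ((d:ℝ) - 2) * l + 1)) := h
      _ ≤ (1 / d) * (((d:ℝ) - 2) * (1 - l) +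
          2 * ((1 - l) + (d:ℝ) / (2 * (s + 1)))) := by
          apply mul_le_mul_of_nonneg_left _ (by positivity)
          linarith
      _ = (1 - l) + 1 / (s + 1) := by
          field_simp
          ring
  rw [hfrac]
  linarith
end
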